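/- arXiv:2012.04456 — 3 statements merged into one kernel-verified Lean document; each statement's English description precedes it below -/
import Mathlib

section
/- Let a > 0, b > 1/2, ε > 0, and define g(x) = x / ((ε + x²)·(1 + a·x^{2b})) for x > 0. Then g(x) → 0 as x → 0⁺ and g(x) → 0 as x → ∞, g is nonnegative, and g has a unique local maximum on (0, ∞) (i.e., g is unimodal): g' changes sign exactly once, from positive to negative. -/
open Real Filter Set

theorem umap_repulsive_limits_unimodal (a b ε : ℝ) (ha : 0 < a) (hb : 1/2 < b) (hε : 0 < ε)
    (g : ℝ → ℝ) (hg : ∀ x > 0, g x = x / ((ε + x^2) * (1 + a * x ^ (2*b)))) :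
    Tendsto g (nhdsWithin 0 (Ioi 0)) (nhds 0) ∧
    Tendsto g atTop (nhds 0) ∧
    (∀ x > 0, 0 ≤ g x) ∧
    (∃ x₀ > 0, (∀ x ∈ Ioo 0 x₀, 0 < deriv g x) ∧ (∀ x ∈ Ioi x₀, deriv g x < 0)) := by
  have h2b : (0:ℝ) < 2 * b := by linarith
  have h2b1 : (0:ℝ) < 2 * b - 1 := by linarith
  set D : ℝ → ℝ := fun x => (ε + x^2) * (1 + a * x ^ (2*b)) with hD_def
  set N : ℝ → ℝ := fun x =>
    ε - x^2 - a*ε*(2*b-1)*x^(2*b) - a*(2*b+1)*(x^(2*b)*x^2) with hN_def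
  -- D is positive on (0,∞) and at every x ≥ 0
  have hDpos : ∀ x : ℝ, 0 ≤ x → 0 < D x := by
    intro x hx
    have h1 : 0 < ε + x^2 := by positivity
    have h2 : (0:ℝ) ≤ a * x ^ (2*b) := by positivity
    have h3 : 0 < 1 + a * x ^ (2*b) := by linarith
    exact mul_pos h1 h3
  -- g is nonneg on (0,∞)
  have hgnonneg : ∀ x > 0, 0 ≤ g x := by
    intro x hx
    rw [hg x hx]
    exact div_nonneg hx.le (hDpos x hx.le).le
  -- derivative of g at x > 0
  have hderiv : ∀ x > 0, HasDerivAt g (N x / (D x)^2) x := by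
    intro x hx
    have hx1 : x * x ^ (2*b-1) = x ^ (2*b) := by
      have h := Real.rpow_add hx 1 (2*b-1)
      rw [Real.rpow_one] at h
      rw [show (1:ℝ) + (2*b-1) = 2*b by ring] at h
      exact h.symm
    have h1 : HasDerivAt (fun y : ℝ => ε + y^2) (2*x) x := by
      simpa using ((hasDerivAt_pow 2 x).const_add ε)
    have h2 : HasDerivAt (fun y : ℝ => 1 + a * y ^ (2*b)) (a * ((2*b) * x ^ (2*b-1))) x :=
      ((Real.hasDerivAt_rpow_const (Or.inl hx.ne')).const_mul a).const_add 1
    have hD' : HasDerivAt D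
        (2*x * (1 + a * x ^ (2*b)) + (ε + x^2) * (a * ((2*b) * x ^ (2*b-1)))) x := h1.mul h2
    have hf : HasDerivAt (fun y : ℝ => y / D y)
        ((1 * D x - x * (2*x * (1 + a * x ^ (2*b)) + (ε + x^2) * (a * ((2*b) * x ^ (2*b-1))))) / (D x)^2) x :=
      (hasDerivAt_id x).div hD' (hDpos x hx.le).ne'
    have hnum : 1 * D x - x * (2*x * (1 + a * x ^ (2*b)) + (ε + x^2) * (a * ((2*b) * x ^ (2*b-1)))) = N x := by
      have : x * ((ε + x^2) * (a * ((2*b) * x ^ (2*b-1)))) = (ε + x^2) * (a * ((2*b) * x ^ (2*b))) := by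
        rw [← hx1]; ring
      simp only [hD_def, hN_def]
      nlinarith [this]
    rw [hnum] at hf
    apply hf.congr_of_eventuallyEq
    filter_upwards [isOpen_Ioi.mem_nhds hx] with y hy
    exact hg y hy
  -- N is strictly decreasing on [0,∞)
  have hanti : ∀ x y : ℝ, 0 ≤ x → x < y → N y < N x := by
    intro x y hx hxy
    have hy : 0 < y := lt_of_le_of_lt hx hxy
    have h1 : x^2 < y^2 := by nlinarith
    have h2 : x ^ (2*b) < y ^ (2*b) := Real.rpow_lt_rpow hx hxy h2b
    have h3 : x ^ (2*b) * x^2 < y ^ (2*b) * y^2 := by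
      have hxb : 0 ≤ x ^ (2*b) := Real.rpow_nonneg hx _
      have hx2 : 0 ≤ x^2 := sq_nonneg x
      exact mul_lt_mul'' h2 h1 hxb hx2
    simp only [hN_def]
    have c1 : 0 < a*ε*(2*b-1) := by positivity
    have c2 : 0 < a*(2*b+1) := by positivity
    nlinarith [mul_lt_mul_of_pos_left h2 c1, mul_lt_mul_of_pos_left h3 c2]
  -- N is continuous
  have hNcont : Continuous N := by
    have hr : Continuous (fun x : ℝ => x ^ (2*b)) := by
      rw [continuous_iff_continuousAt]
      intro x
      exact Real.continuousAt_rpow_const x (2*b) (Or.inr h2b.le)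
    simp only [hN_def]
    exact ((continuous_const.sub (continuous_pow 2)).sub (continuous_const.mul hr)).sub
      (continuous_const.mul (hr.mul (continuous_pow 2)))
  -- find the root x₀
  have hN0 : N 0 = ε := by
    simp [hN_def, Real.zero_rpow h2b.ne']
  set M : ℝ := Real.sqrt ε + 1 with hM_def
  have hM0 : 0 < M := by positivity
  have hMsq : ε < M^2 := by
    have := Real.sq_sqrt hε.le
    have h0 : 0 ≤ Real.sqrt ε := Real.sqrt_nonneg ε
    nlinarith
  have hNM : N M < 0 := by
    have h1 : 0 ≤ a*ε*(2*b-1)*M^(2*b) := by positivity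
    have h2 : 0 ≤ a*(2*b+1)*(M^(2*b)*M^2) := by positivity
    simp only [hN_def]
    nlinarith
  have hivt : (0:ℝ) ∈ Icc (N M) (N 0) := ⟨hNM.le, by rw [hN0]; exact hε.le⟩
  obtain ⟨x₀, hx₀mem, hNx₀⟩ := intermediate_value_Icc' hM0.le hNcont.continuousOn hivt
  have hx₀pos : 0 < x₀ := by
    rcases lt_or_eq_of_le hx₀mem.1 with h | h
    · exact h
    · exfalso; rw [← h] at hNx₀; rw [hN0] at hNx₀; linarith
  refine ⟨?_, ?_, hgnonneg, x₀, hx₀pos, ?_, ?_⟩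
  · -- limit at 0⁺
    have hcont : ContinuousAt (fun x : ℝ => x / D x) 0 := by
      have hr : ContinuousAt (fun x : ℝ => x ^ (2*b)) 0 :=
        Real.continuousAt_rpow_const 0 (2*b) (Or.inr h2b.le)
      have hDc : ContinuousAt D 0 := by
        apply ContinuousAt.mul
        · exact (continuousAt_const.add ((continuous_pow 2).continuousAt))
        · exact continuousAt_const.add (continuousAt_const.mul hr)
      exact continuousAt_id.div hDc (hDpos 0 le_rfl).ne'
    have := hcont.tendsto
    rw [show (0:ℝ) / D 0 = 0 from zero_div _] at this
    refine (this.mono_left nhdsWithin_le_nhds).congr' ?_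
    filter_upwards [self_mem_nhdsWithin] with y hy
    exact (hg y hy).symm
  · -- limit at ∞
    apply tendsto_of_tendsto_of_tendsto_of_le_of_le' tendsto_const_nhds tendsto_inv_atTop_zero
    · filter_upwards [eventually_ge_atTop (1:ℝ)] with x hx
      exact hgnonneg x (by linarith)
    · filter_upwards [eventually_ge_atTop (1:ℝ)] with x hx
      have hx0 : (0:ℝ) < x := by linarith
      rw [hg x hx0]
      have hx2 : 0 < x^2 := by positivity
      have hle : x^2 ≤ D x := by
        have h2 : (0:ℝ) ≤ a * x ^ (2*b) := by positivity
        simp only [hD_def]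
        nlinarith [mul_nonneg (by positivity : (0:ℝ) ≤ ε + x^2) h2]
      calc x / D x ≤ x / x^2 := div_le_div_of_nonneg_left hx0.le hx2 hle
        _ = x⁻¹ := by rw [sq, div_mul_eq_div_div, div_self hx0.ne']; exact one_div x
  · intro x hx
    have hd := (hderiv x hx.1).deriv
    rw [hd]
    have hN : 0 < N x := by
      have := hanti x x₀ hx.1.le hx.2
      linarith [hNx₀ ▸ this]
    exact div_pos hN (pow_pos (hDpos x hx.1.le) 2)
  · intro x hx
    have hxpos : 0 < x := lt_trans hx₀pos hx
    have hd := (hderiv x hxpos).deriv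
    rw [hd]
    have hN : N x < 0 := by
      have := hanti x₀ x hx₀pos.le hx
      linarith [hNx₀ ▸ this]
    exact div_neg_of_neg_of_pos hN (pow_pos (hDpos x hxpos.le) 2)
end

section
/- Let a > 0, b > 1/2, ε > 0, and g(x) = x / ((ε + x²)·(1 + a·x^{2b})). Then g'(x) = -( a·x^{2b}·((2b+1)·x² + ε·(2b-1)) + x² - ε ) / ( (x² + ε)²·(a·x^{2b} + 1)² ), and the numerator N(x) = a·x^{2b}·((2b+1)·x² + ε·(2b-1)) + x² - ε of -g'(x) is strictly increasing on (0, ∞) with N(x) < 0 for x sufficiently small and N(x) → ∞ as x → ∞. -/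
/-!
The derivative is the quotient rule together with `x^(2b-1) = x^(2b) / x`. For `b ≥ 1/2` both
factors of `a x^(2b) ((2b+1) x² + ε (2b-1))` are nonnegative and nondecreasing on `(0, ∞)`, so the
numerator `N` is strictly increasing there (its `x² - ε` part is) and bounded below by `x² - ε`;
and `N` is continuous at `0` with `N 0 = -ε < 0`.
-/

open Real Filter Set Topology

noncomputable def umapRepulsion (a b ε x : ℝ) : ℝ :=
  x / ((ε + x ^ 2) * (1 + a * x ^ (2 * b)))

noncomputable def umapRepulsionNumerator (a b ε x : ℝ) : ℝ :=
  a * x ^ (2 * b) * ((2 * b + 1) * x ^ 2 + ε * (2 * b - 1)) + x ^ 2 - ε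

section

variable {a b ε : ℝ}

theorem hasDerivAt_umapRepulsion (ha : 0 ≤ a) (hε : 0 ≤ ε) {x : ℝ} (hx : 0 < x) :
    HasDerivAt (umapRepulsion a b ε)
      (-umapRepulsionNumerator a b ε x / ((x ^ 2 + ε) ^ 2 * (a * x ^ (2 * b) + 1) ^ 2)) x := by
  have hsq : HasDerivAt (fun y : ℝ => ε + y ^ 2) (2 * x) x := by
    simpa using (hasDerivAt_pow 2 x).const_add ε
  have hrpow : HasDerivAt (fun y : ℝ => 1 + a * y ^ (2 * b)) (a * (2 * b * x ^ (2 * b - 1))) x := by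
    have := Real.hasDerivAt_rpow_const (p := 2 * b) (Or.inl hx.ne')
    exact (this.const_mul a).const_add 1
  have hden : (ε + x ^ 2) * (1 + a * x ^ (2 * b)) ≠ 0 := by positivity
  refine ((hasDerivAt_id' x).div (hsq.mul hrpow) hden).congr_deriv ?_
  rw [Pi.mul_apply, Real.rpow_sub hx, Real.rpow_one, umapRepulsionNumerator]
  field_simp
  ring

theorem strictMonoOn_umapRepulsionNumerator (ha : 0 ≤ a) (hε : 0 ≤ ε) (hb : 1 / 2 ≤ b) :
    StrictMonoOn (umapRepulsionNumerator a b ε) (Ioi 0) := by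
  intro x (hx : 0 < x) y (hy : 0 < y) hxy
  have hfactor : 0 ≤ (2 * b + 1) * x ^ 2 + ε * (2 * b - 1) := by
    have : 0 ≤ ε * (2 * b - 1) := mul_nonneg hε (by linarith)
    positivity
  have hprod : a * x ^ (2 * b) * ((2 * b + 1) * x ^ 2 + ε * (2 * b - 1)) ≤
      a * y ^ (2 * b) * ((2 * b + 1) * y ^ 2 + ε * (2 * b - 1)) := by
    gcongr
  have hsq : x ^ 2 < y ^ 2 := by gcongr
  unfold umapRepulsionNumerator
  linarith

theorem exists_umapRepulsionNumerator_neg_on_Ioo (hb : 0 < b) (hε : 0 < ε) :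
    ∃ δ > 0, ∀ x ∈ Ioo (0 : ℝ) δ, umapRepulsionNumerator a b ε x < 0 := by
  have hcont : ContinuousAt (umapRepulsionNumerator a b ε) 0 := by
    have := Real.continuousAt_rpow_const 0 (2 * b) (Or.inr (by linarith))
    unfold umapRepulsionNumerator
    fun_prop
  have hzero : umapRepulsionNumerator a b ε 0 = -ε := by
    simp [umapRepulsionNumerator, Real.zero_rpow (by positivity : 2 * b ≠ 0)]
  have hneg : ∀ᶠ x in 𝓝 0, umapRepulsionNumerator a b ε x < 0 :=
    hcont.eventually_lt continuousAt_const (by linarith)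
  obtain ⟨δ, hδ, hball⟩ := Metric.eventually_nhds_iff.mp hneg
  refine ⟨δ, hδ, fun x hx => hball ?_⟩
  rw [Real.dist_0_eq_abs, abs_of_pos hx.1]
  exact hx.2

theorem tendsto_umapRepulsionNumerator_atTop (ha : 0 ≤ a) (hε : 0 ≤ ε) (hb : 1 / 2 ≤ b) :
    Tendsto (umapRepulsionNumerator a b ε) atTop atTop := by
  have hlower : ∀ᶠ x in atTop, x ^ 2 - ε ≤ umapRepulsionNumerator a b ε x := by
    filter_upwards [eventually_ge_atTop 0] with x hx
    have : 0 ≤ ε * (2 * b - 1) := mul_nonneg hε (by linarith)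
    unfold umapRepulsionNumerator
    have : 0 ≤ a * x ^ (2 * b) * ((2 * b + 1) * x ^ 2 + ε * (2 * b - 1)) := by positivity
    linarith
  refine tendsto_atTop_mono' _ hlower ?_
  exact tendsto_atTop_add_const_right _ (-ε) (tendsto_pow_atTop two_ne_zero)

end

theorem umap_repulsive_derivative (a b ε : ℝ) (ha : 0 < a) (hb : 1/2 < b) (hε : 0 < ε)
    (g N : ℝ → ℝ)
    (hg : ∀ x > 0, g x = x / ((ε + x^2) * (1 + a * x ^ (2*b))))
    (hN : ∀ x > 0, N x = a * x ^ (2*b) * ((2*b + 1) * x^2 + ε * (2*b - 1)) + x^2 - ε) :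
    (∀ x > 0, HasDerivAt g (-(N x) / ((x^2 + ε)^2 * (a * x ^ (2*b) + 1)^2)) x) ∧
    StrictMonoOn N (Ioi 0) ∧
    (∃ δ > 0, ∀ x ∈ Ioo (0:ℝ) δ, N x < 0) ∧
    Tendsto N atTop atTop := by
  have hNeq : EqOn (umapRepulsionNumerator a b ε) N (Ioi 0) := fun x hx => (hN x hx).symm
  refine ⟨fun x hx => ?_, (strictMonoOn_umapRepulsionNumerator ha.le hε.le hb.le).congr hNeq,
    ?_, ?_⟩
  · rw [hN x hx]
    exact (hasDerivAt_umapRepulsion ha.le hε.le hx).congr_of_eventuallyEq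
      (eventually_of_mem (Ioi_mem_nhds hx) hg)
  · obtain ⟨δ, hδ, hneg⟩ :=
      exists_umapRepulsionNumerator_neg_on_Ioo (a := a) (b := b) (by linarith) hε
    exact ⟨δ, hδ, fun x hx => (hN x hx.1).trans_lt (hneg x hx)⟩
  · exact (tendsto_umapRepulsionNumerator_atTop ha.le hε.le hb.le).congr'
      (eventually_of_mem (Ioi_mem_atTop 0) hNeq)
end

section
/- Fix d_{ik1}, …, d_{ik5} ≥ 0 and consider the TriMap per-neighbor loss L(d) = Σ_{l=1}^{5} (d² + 1)/(d² + d_{ikl}² + 2) as a function of d = d_{ij} ≥ 0. Then L'(d) = Σ_l 2d·(d_{ikl}² + 1)/(d² + d_{ikl}² + 2)² ≥ 0 with equality only at d = 0, so L is strictly increasing on (0, ∞), and L'(d) → 0 both as d → 0⁺ and as d → ∞. -/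
open Real Filter Set

theorem trimap_neighbor_loss (dk : Fin 5 → ℝ) (hdk : ∀ l, 0 ≤ dk l)
    (L L' : ℝ → ℝ)
    (hL : ∀ d, L d = ∑ l : Fin 5, (d^2 + 1) / (d^2 + (dk l)^2 + 2))
    (hL' : ∀ d, L' d = ∑ l : Fin 5, 2 * d * ((dk l)^2 + 1) / (d^2 + (dk l)^2 + 2)^2) :
    StrictMonoOn L (Ioi 0) ∧
    (∀ d, HasDerivAt L (L' d) d) ∧
    (∀ d ≥ 0, 0 ≤ L' d ∧ (L' d = 0 → d = 0)) ∧
    Tendsto L' (nhdsWithin 0 (Ioi 0)) (nhds 0) ∧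
    Tendsto L' atTop (nhds 0) := by
  have hden : ∀ (d : ℝ) (l : Fin 5), (0:ℝ) < d^2 + (dk l)^2 + 2 := by
    intro d l; positivity
  -- derivative
  have hderiv : ∀ d, HasDerivAt L (L' d) d := by
    intro d
    have h : ∀ l : Fin 5, HasDerivAt (fun x : ℝ => (x^2+1)/(x^2+(dk l)^2+2))
        (2 * d * ((dk l)^2 + 1) / (d^2 + (dk l)^2 + 2)^2) d := by
      intro l
      have h1 : HasDerivAt (fun x : ℝ => x^2 + 1) (2*d) d := by
        simpa using ((hasDerivAt_pow 2 d).add_const 1)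
      have h2 : HasDerivAt (fun x : ℝ => x^2 + (dk l)^2 + 2) (2*d) d := by
        simpa using (((hasDerivAt_pow 2 d).add_const ((dk l)^2)).add_const 2)
      have h3 := h1.div h2 (ne_of_gt (hden d l))
      refine h3.congr_deriv ?_
      ring
    have hsum := HasDerivAt.fun_sum (fun l (_ : l ∈ Finset.univ) => h l)
    rw [hL' d]
    refine HasDerivAt.congr_of_eventuallyEq hsum ?_
    filter_upwards with x
    rw [hL x]
  -- positivity of L' on (0, ∞)
  have hpos : ∀ d : ℝ, 0 < d → 0 < L' d := by
    intro d hd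
    rw [hL' d]
    refine Finset.sum_pos (fun l _ => ?_) ⟨0, Finset.mem_univ 0⟩
    have := hden d l
    positivity
  have hnonneg : ∀ d : ℝ, 0 ≤ d → 0 ≤ L' d := by
    intro d hd
    rw [hL' d]
    refine Finset.sum_nonneg (fun l _ => ?_)
    have := hden d l
    positivity
  -- L' is continuous
  have hL'eq : L' = fun d => ∑ l : Fin 5, 2 * d * ((dk l)^2 + 1) / (d^2 + (dk l)^2 + 2)^2 :=
    funext hL'
  have hcont : Continuous L' := by
    rw [hL'eq]
    refine continuous_finset_sum _ (fun l _ => ?_)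
    refine Continuous.div (by continuity) (by continuity) (fun d => ?_)
    have := hden d l
    positivity
  refine ⟨?_, hderiv, ?_, ?_, ?_⟩
  · -- strict mono
    refine strictMonoOn_of_deriv_pos (convex_Ioi 0) ?_ ?_
    · exact fun x _ => ((hderiv x).differentiableAt.continuousAt).continuousWithinAt
    · intro x hx
      rw [interior_Ioi] at hx
      rw [(hderiv x).deriv]
      exact hpos x hx
  · intro d hd
    refine ⟨hnonneg d hd, fun h0 => ?_⟩
    by_contra hne
    have hd' : 0 < d := lt_of_le_of_ne hd (Ne.symm hne)
    exact absurd h0 (ne_of_gt (hpos d hd'))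
  · -- limit at 0+
    have h0 : L' 0 = 0 := by
      rw [hL' 0]; simp
    have := (hcont.tendsto 0).mono_left (nhdsWithin_le_nhds (s := Ioi 0))
    rwa [h0] at this
  · -- limit at infinity
    rw [hL'eq]
    have h0 : (0:ℝ) = ∑ _l : Fin 5, (0:ℝ) := by simp
    rw [h0]
    refine tendsto_finset_sum _ (fun l _ => ?_)
    set c := (dk l)^2 with hc
    have hc0 : 0 ≤ c := sq_nonneg _
    have hlim : Tendsto (fun d : ℝ => 2 * (c+1) / d) atTop (nhds 0) :=
      tendsto_const_nhds.div_atTop tendsto_id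
    refine squeeze_zero' ?_ ?_ hlim
    · filter_upwards [eventually_ge_atTop (0:ℝ)] with d hd
      have := hden d l
      positivity
    · filter_upwards [eventually_ge_atTop (1:ℝ)] with d hd
      show 2 * d * (c + 1) / (d ^ 2 + c + 2) ^ 2 ≤ 2 * (c+1) / d
      have hd0 : 0 < d := lt_of_lt_of_le one_pos hd
      have hdenpos : (0:ℝ) < (d^2 + c + 2)^2 := by positivity
      rw [div_le_div_iff₀ hdenpos hd0]
      nlinarith [sq_nonneg (d^2 + c + 2), sq_nonneg d, mul_pos hd0 hd0]
end
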